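/- arXiv:1910.03494 — 6 statements merged into one kernel-verified Lean document; each statement's English description precedes it below -/
import Mathlib

section
/- Let A be an integral domain and let a, b ∈ A be nonzero elements that are relatively prime, meaning aA ∩ bA = abA. Then aX - b is a prime element of the polynomial ring A[X]. -/
/-!
The polynomial `aX - b` generates the kernel of evaluation `A[X] → K` at `b / a` in the fraction
field `K`; the image is a subring of a field, so this kernel is a prime ideal. For the generation,
the hypothesis says exactly that `b` is a nonzerodivisor modulo `a`. If `f(b/a) = 0` with `f` of
degree `n`, then `a ^ n f(b/a) = 0` shows that `a` divides `lc(f) b ^ n`, hence `lc(f)`, so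
subtracting a multiple of `aX - b` lowers the degree of `f`.
-/

open Polynomial

theorem dvd_of_dvd_pow_mul_of_dvd_mul {M : Type*} [CommMonoid M] {a b : M}
    (hab : ∀ t, a ∣ b * t → a ∣ t) {t : M} : ∀ {n : ℕ}, a ∣ b ^ n * t → a ∣ t
  | 0, h => by simpa using h
  | n + 1, h => dvd_of_dvd_pow_mul_of_dvd_mul hab (hab _ (by rwa [pow_succ', mul_assoc] at h))

theorem degree_C_mul_X_sub_C {R : Type*} [Ring R] {a : R} (b : R) (ha : a ≠ 0) :
    (C a * X - C b).degree = 1 := by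
  rw [sub_eq_add_neg, ← C_neg]
  exact degree_linear ha

theorem leadingCoeff_C_mul_X_sub_C {R : Type*} [Ring R] {a : R} (b : R) (ha : a ≠ 0) :
    (C a * X - C b).leadingCoeff = a := by
  rw [sub_eq_add_neg, ← C_neg]
  exact leadingCoeff_linear ha

theorem dvd_of_dvd_mul_of_inf_span_eq {A : Type*} [CommRing A] [IsDomain A] {a b t : A}
    (hb : b ≠ 0) (hab : Ideal.span {a} ⊓ Ideal.span {b} = Ideal.span {a * b})
    (h : a ∣ b * t) : a ∣ t := by
  have hmem : b * t ∈ Ideal.span {a} ⊓ Ideal.span {b} :=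
    ⟨Ideal.mem_span_singleton.mpr h, Ideal.mem_span_singleton.mpr (dvd_mul_right b t)⟩
  obtain ⟨s, hs⟩ := Ideal.mem_span_singleton.mp (hab ▸ hmem)
  exact ⟨s, mul_left_cancel₀ hb (by rw [hs]; ring)⟩

section FractionRing

variable {A K : Type*} [CommRing A] [Field K] [Algebra A K] [IsFractionRing A K]

theorem aeval_div_C_mul_X_sub_C {a : A} (b : A) (ha : a ≠ 0) :
    aeval (algebraMap A K b / algebraMap A K a) (C a * X - C b) = 0 := by
  have ha' : algebraMap A K a ≠ 0 := by simpa using ha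
  simp [mul_div_cancel₀ _ ha']

variable [IsDomain A]

theorem dvd_leadingCoeff_of_aeval_div_eq_zero {a b : A} (ha : a ≠ 0)
    (hab : ∀ t, a ∣ b * t → a ∣ t) {f : A[X]}
    (hf : aeval (algebraMap A K b / algebraMap A K a) f = 0) : a ∣ f.leadingCoeff := by
  have hinj := IsFractionRing.injective A K
  have hroot : (f.scaleRoots a).IsRoot b := by
    have :=
      scaleRoots_aeval_eq_zero_of_aeval_div_eq_zero hinj hf (mem_nonZeroDivisors_of_ne_zero ha)
    rw [aeval_algebraMap_apply] at this
    exact hinj (by simpa using this)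
  refine dvd_of_dvd_pow_mul_of_dvd_mul hab (n := f.natDegree) ?_
  rw [mul_comm, ← coeff_scaleRoots_natDegree f a]
  refine dvd_term_of_isRoot_of_dvd_terms _ hroot fun j hj => ?_
  rw [coeff_scaleRoots]
  rcases lt_or_gt_of_ne hj with hlt | hgt
  · exact (dvd_pow_self a (Nat.sub_ne_zero_of_lt hlt)).mul_left _ |>.mul_right _
  · simp [coeff_eq_zero_of_natDegree_lt hgt]

theorem dvd_of_aeval_div_eq_zero {a b : A} (ha : a ≠ 0)
    (hab : ∀ t, a ∣ b * t → a ∣ t) {f : A[X]}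
    (hf : aeval (algebraMap A K b / algebraMap A K a) f = 0) : C a * X - C b ∣ f := by
  induction hn : f.natDegree using Nat.strong_induction_on generalizing f with
  | _ n ih =>
  by_cases hf0 : f = 0
  · simp [hf0]
  cases n with
  | zero =>
    rw [eq_C_of_natDegree_eq_zero hn] at hf hf0
    simp_all
  | succ m =>
    obtain ⟨d, hd⟩ := dvd_leadingCoeff_of_aeval_div_eq_zero ha hab hf
    have hd0 : d ≠ 0 := by rintro rfl; simp_all
    set g := C d * X ^ m * (C a * X - C b)
    have hg_deg : g.degree = f.degree := by
      rw [degree_mul, degree_C_mul_X_pow m hd0, degree_C_mul_X_sub_C b ha,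
        degree_eq_natDegree hf0, hn]
      rfl
    have hg_lc : g.leadingCoeff = f.leadingCoeff := by
      rw [leadingCoeff_mul, leadingCoeff_C_mul_X_pow, leadingCoeff_C_mul_X_sub_C b ha, hd, mul_comm]
    have hlt : (f - g).natDegree < m + 1 := by
      by_cases hfg : f - g = 0
      · simp [hfg]
      exact hn ▸ natDegree_lt_natDegree hfg (degree_sub_lt_left hg_deg.symm hf0 hg_lc.symm)
    obtain ⟨q, hq⟩ := ih _ hlt (by simp [g, hf, aeval_div_C_mul_X_sub_C b ha]) rfl
    exact ⟨q + C d * X ^ m, by rw [mul_add, ← hq, mul_comm]; ring⟩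

theorem ker_aeval_div_eq_span {a b : A} (ha : a ≠ 0) (hab : ∀ t, a ∣ b * t → a ∣ t) :
    RingHom.ker (aeval (algebraMap A K b / algebraMap A K a)) = Ideal.span {C a * X - C b} := by
  ext f
  rw [RingHom.mem_ker, Ideal.mem_span_singleton]
  refine ⟨dvd_of_aeval_div_eq_zero ha hab, ?_⟩
  rintro ⟨g, rfl⟩
  rw [map_mul, aeval_div_C_mul_X_sub_C b ha, zero_mul]

end FractionRing

/-- If `a, b` are nonzero relatively prime elements of an integral domain `A`
(meaning `aA ∩ bA = abA`), then `aX - b` is a prime element of `A[X]`. -/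
theorem stmt_4 (A : Type*) [CommRing A] [IsDomain A] (a b : A) (ha : a ≠ 0) (hb : b ≠ 0)
    (hrp : Ideal.span {a} ⊓ Ideal.span {b} = Ideal.span {a * b}) :
    Prime (C a * X - C b : A[X]) := by
  have hne : C a * X - C b ≠ 0 :=
    ne_zero_of_degree_gt (n := 0) (by rw [degree_C_mul_X_sub_C b ha]; exact zero_lt_one)
  have hab : ∀ t, a ∣ b * t → a ∣ t := fun _ => dvd_of_dvd_mul_of_inf_span_eq hb hrp
  rw [← Ideal.span_singleton_prime hne, ← ker_aeval_div_eq_span (K := FractionRing A) ha hab]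
  exact RingHom.ker_isPrime _
end

section
/- Let A = k[x,y] be a polynomial ring in two variables over a field k, and let a, b ∈ A be nonzero elements such that aA is a prime ideal, aA ∩ bA = abA, and aA + bA is a prime ideal. Then the ring B = A[X]/(aX - b) is a unique factorization domain. -/
/-!
In `B = A[X]/(aX - b)` we have `a X = b`, so every element of `B` becomes an element of `A`
after multiplication by a power of `a`; thus `B[1/a] = A[1/a]`. Moreover
`B/aB = A[X]/(a, b) = (A/(a, b))[X]` is a domain, so `a` is prime in `B`, and `aX - b` is
irreducible because `a, b` are coprime, so `B` is a domain.

Nagata's argument then transfers factoriality from `A` to `B`. By Kaplansky's criterion it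
suffices that every nonzero prime `P` of `B` contains a prime element. If `a ∉ P`, then `P ∩ A`
is a nonzero prime of `A`, so contains a prime `q`; writing `q = aᵉ r` in `B` with `a ∤ r`,
divisibility by `r` in `B` corresponds to divisibility by `q` in `A`, so `r` is a prime of `B`
lying in `P`.
-/

open Polynomial

theorem Prime.dvd_of_dvd_pow_mul {M : Type*} [CommMonoidWithZero M] [IsCancelMulZero M]
    {p r y : M} (hp : Prime p) (hr : ¬p ∣ r) {n : ℕ} (h : r ∣ p ^ n * y) : r ∣ y := by
  obtain ⟨s, hs⟩ := h
  obtain ⟨t, rfl⟩ := hp.pow_dvd_of_dvd_mul_left n hr (hs ▸ dvd_mul_right _ _)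
  exact ⟨t, mul_left_cancel₀ (pow_ne_zero n hp.ne_zero) (by rw [hs, mul_left_comm])⟩

theorem isRelPrime_of_span_inf_span_eq_span_mul {R : Type*} [CommRing R] [IsDomain R] {a b : R}
    (ha : a ≠ 0) (hb : b ≠ 0)
    (h : Ideal.span {a} ⊓ Ideal.span {b} = Ideal.span {a * b}) : IsRelPrime a b := by
  rintro c ⟨a', rfl⟩ ⟨b', rfl⟩
  have hmem : c * a' * b' ∈ Ideal.span {c * a'} ⊓ Ideal.span {c * b'} :=
    Ideal.mem_inf.mpr ⟨Ideal.mem_span_singleton.mpr ⟨b', rfl⟩,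
      Ideal.mem_span_singleton.mpr ⟨a', by ring⟩⟩
  obtain ⟨t, ht⟩ := Ideal.mem_span_singleton.mp (h ▸ hmem)
  refine IsUnit.of_mul_eq_one t (mul_left_cancel₀ hb (mul_left_cancel₀ ha ?_))
  linear_combination -c * ht

section Nagata

variable {R B : Type*} [CommRing R] [CommRing B] {μ : R →+* B} {a : R}

theorem dvd_map_iff_of_map_eq_pow_mul (hμ : Function.Injective μ)
    (hden : ∀ z : B, ∃ (n : ℕ) (m : R), μ a ^ n * z = μ m) {q : R} (hq : Prime q)
    (hqa : ¬q ∣ a) {e : ℕ} {r : B} (hqr : μ q = μ a ^ e * r) (m : R) :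
    r ∣ μ m ↔ q ∣ m := by
  constructor
  · rintro ⟨s, hs⟩
    obtain ⟨n, m', hm'⟩ := hden s
    have : a ^ (e + n) * m = q * m' := hμ (by
      simp only [map_mul, map_pow, hs, hqr, ← hm', pow_add]; ring)
    exact (hq.dvd_or_dvd ⟨m', this⟩).resolve_left (mt hq.dvd_of_dvd_pow hqa)
  · rintro ⟨m', rfl⟩
    exact ⟨μ a ^ e * μ m', by rw [map_mul, hqr]; ring⟩

theorem prime_of_map_eq_pow_mul [IsDomain B] (hμ : Function.Injective μ)
    (hden : ∀ z : B, ∃ (n : ℕ) (m : R), μ a ^ n * z = μ m) (hμa : Prime (μ a)) {q : R}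
    (hq : Prime q) (hqa : ¬q ∣ a) {e : ℕ} {r : B} (hr : ¬μ a ∣ r)
    (hqr : μ q = μ a ^ e * r) : Prime r := by
  have hdvd := dvd_map_iff_of_map_eq_pow_mul hμ hden hq hqa hqr
  refine ⟨fun hr0 => ?_, fun hu => ?_, fun z w hzw => ?_⟩
  · rw [hr0, mul_zero, map_eq_zero_iff μ hμ] at hqr
    exact hq.ne_zero hqr
  · exact hq.not_isUnit (isUnit_of_dvd_one ((hdvd 1).mp (by simpa using hu.dvd)))
  · obtain ⟨n₁, m₁, h₁⟩ := hden z
    obtain ⟨n₂, m₂, h₂⟩ := hden w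
    have : r ∣ μ (m₁ * m₂) := by
      rw [map_mul, ← h₁, ← h₂]
      exact (hzw.mul_left (μ a ^ n₁ * μ a ^ n₂)).trans ⟨1, by ring⟩
    rcases hq.dvd_or_dvd ((hdvd _).mp this) with h | h
    · exact .inl (hμa.dvd_of_dvd_pow_mul hr (h₁ ▸ (hdvd m₁).mpr h))
    · exact .inr (hμa.dvd_of_dvd_pow_mul hr (h₂ ▸ (hdvd m₂).mpr h))

theorem uniqueFactorizationMonoid_of_exists_pow_mul_eq_map [IsDomain B]
    [UniqueFactorizationMonoid R] [WfDvdMonoid B] (hμ : Function.Injective μ)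
    (hden : ∀ z : B, ∃ (n : ℕ) (m : R), μ a ^ n * z = μ m) (hμa : Prime (μ a)) :
    UniqueFactorizationMonoid B := by
  refine UniqueFactorizationMonoid.iff_exists_prime_mem_of_isPrime.mpr fun P hP0 hP => ?_
  by_cases haP : μ a ∈ P
  · exact ⟨_, haP, hμa⟩
  obtain ⟨z, hzP, hz0⟩ := Submodule.exists_mem_ne_zero_of_ne_bot hP0
  obtain ⟨n, m, hm⟩ := hden z
  have hcomap : P.comap μ ≠ ⊥ := by
    refine fun h => pow_ne_zero n hμa.ne_zero (mul_eq_zero.mp ?_ |>.resolve_right hz0)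
    rw [hm, map_eq_zero_iff μ hμ, ← Ideal.mem_bot, ← h, Ideal.mem_comap, ← hm]
    exact P.mul_mem_left _ hzP
  obtain ⟨q, hqP, hq⟩ := (hP.comap μ).exists_mem_prime_of_ne_bot hcomap
  have hqa : ¬q ∣ a := fun h => haP (P.mem_of_dvd (map_dvd μ h) hqP)
  obtain ⟨e, r, hr, hqr⟩ := WfDvdMonoid.max_power_factor'
    ((map_ne_zero_iff μ hμ).mpr hq.ne_zero) hμa.not_isUnit
  refine ⟨r, ?_, prime_of_map_eq_pow_mul hμ hden hμa hq hqa hr hqr⟩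
  rw [Ideal.mem_comap, hqr] at hqP
  exact (hP.mem_or_mem hqP).resolve_left (mt (hP.mem_of_pow_mem e) haP)

end Nagata

namespace Polynomial

variable {A : Type*} [CommRing A]

theorem injective_algebraMap_quotient_span_singleton [IsDomain A] {g : A[X]}
    (hg : 0 < g.degree) : Function.Injective (algebraMap A (A[X] ⧸ Ideal.span {g})) := by
  refine (injective_iff_map_eq_zero _).mpr fun c hc => ?_
  rw [← Ideal.Quotient.mk_algebraMap, algebraMap_eq, Ideal.Quotient.eq_zero_iff_mem,
    Ideal.mem_span_singleton] at hc
  by_contra hc0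
  have := degree_le_of_dvd hc (C_ne_zero.mpr hc0)
  rw [degree_C hc0] at this
  exact (lt_of_lt_of_le hg this).false

theorem degree_C_mul_X_sub_C {a : A} (ha : a ≠ 0) (b : A) :
    (C a * X - C b).degree = 1 := by
  compute_degree!

theorem algebraMap_mul_mk_X_quotient_C_mul_X_sub_C (a b : A) :
    algebraMap A (A[X] ⧸ Ideal.span {C a * X - C b}) a * Ideal.Quotient.mk _ X =
      algebraMap A _ b := by
  rw [← Ideal.Quotient.mk_algebraMap, ← Ideal.Quotient.mk_algebraMap, algebraMap_eq,
    ← map_mul, Ideal.Quotient.mk_eq_mk_iff_sub_mem]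
  exact Ideal.mem_span_singleton_self _

theorem injective_algebraMap_quotient_C_mul_X_sub_C [IsDomain A] {a : A} (ha : a ≠ 0) (b : A) :
    Function.Injective (algebraMap A (A[X] ⧸ Ideal.span {C a * X - C b})) :=
  injective_algebraMap_quotient_span_singleton (degree_C_mul_X_sub_C ha b ▸ zero_lt_one)

theorem exists_pow_mul_eq_algebraMap_quotient_C_mul_X_sub_C (a b : A)
    (z : A[X] ⧸ Ideal.span {C a * X - C b}) :
    ∃ (n : ℕ) (m : A), algebraMap A _ a ^ n * z = algebraMap A _ m := by
  obtain ⟨f, rfl⟩ := Ideal.Quotient.mk_surjective z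
  set μ := algebraMap A (A[X] ⧸ Ideal.span {C a * X - C b})
  set mk := Ideal.Quotient.mk (Ideal.span {C a * X - C b})
  have haX : μ a * mk X = μ b := algebraMap_mul_mk_X_quotient_C_mul_X_sub_C a b
  induction f using Polynomial.induction_on with
  | C c => exact ⟨0, c, by rw [pow_zero, one_mul]; exact Ideal.Quotient.mk_algebraMap A _ c⟩
  | add f g hf hg =>
    obtain ⟨n₁, m₁, h₁⟩ := hf
    obtain ⟨n₂, m₂, h₂⟩ := hg
    refine ⟨n₁ + n₂, a ^ n₂ * m₁ + a ^ n₁ * m₂, ?_⟩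
    simp only [map_add, map_mul, map_pow, pow_add]
    linear_combination μ a ^ n₂ * h₁ + μ a ^ n₁ * h₂
  | monomial n c ih =>
    obtain ⟨k, m, hk⟩ := ih
    refine ⟨k + 1, m * b, ?_⟩
    have hmul : mk (C c * X ^ (n + 1)) = mk (C c * X ^ n) * mk X := by
      rw [← map_mul, pow_succ, mul_assoc]
    rw [hmul, map_mul μ, pow_succ]
    linear_combination (μ a * mk X) * hk + μ m * haX

theorem prime_algebraMap_quotient_C_mul_X_sub_C [IsDomain A] {a b : A} (ha : a ≠ 0)
    (hab : (Ideal.span {a} ⊔ Ideal.span {b}).IsPrime) :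
    Prime (algebraMap A (A[X] ⧸ Ideal.span {C a * X - C b}) a) := by
  set I := Ideal.span {C a * X - C b}
  have hker : RingHom.ker (Ideal.Quotient.mk I) ≤ (Ideal.span {a} ⊔ Ideal.span {b}).map C := by
    rw [Ideal.mk_ker, Ideal.map_sup, Ideal.map_span, Ideal.map_span, Set.image_singleton,
      Set.image_singleton, Ideal.span_singleton_le_iff_mem]
    exact Ideal.sub_mem _
      (Ideal.mul_mem_right _ _ (Ideal.mem_sup_left (Ideal.mem_span_singleton_self _)))
      (Ideal.mem_sup_right (Ideal.mem_span_singleton_self _))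
  have hspan : ((Ideal.span {a} ⊔ Ideal.span {b}).map C).map (Ideal.Quotient.mk I) =
      Ideal.span {algebraMap A _ a} := by
    rw [Ideal.map_map, ← algebraMap_eq, ← Ideal.Quotient.algebraMap_eq,
      ← IsScalarTower.algebraMap_eq, Ideal.map_sup,
      Ideal.map_span, Ideal.map_span, Set.image_singleton, Set.image_singleton, sup_eq_left,
      Ideal.span_singleton_le_span_singleton, ← algebraMap_mul_mk_X_quotient_C_mul_X_sub_C]
    exact dvd_mul_right _ _
  rw [← Ideal.span_singleton_prime ((map_ne_zero_iff _
    (injective_algebraMap_quotient_C_mul_X_sub_C ha b)).mpr ha), ← hspan]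
  exact Ideal.map_isPrime_of_surjective Ideal.Quotient.mk_surjective hker

theorem prime_C_mul_X_sub_C [IsDomain A] [UniqueFactorizationMonoid A] {a b : A} (ha : a ≠ 0)
    (hab : IsRelPrime a b) : Prime (C a * X - C b) := by
  have := irreducible_C_mul_X_add_C ha hab.neg_right
  rw [C_neg, ← sub_eq_add_neg] at this
  exact this.prime

theorem uniqueFactorizationMonoid_quotient_C_mul_X_sub_C [IsDomain A]
    [UniqueFactorizationMonoid A] [IsNoetherianRing A] {a b : A} (ha : a ≠ 0)
    (hab : IsRelPrime a b) (habprime : (Ideal.span {a} ⊔ Ideal.span {b}).IsPrime) :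
    ∃ _ : IsDomain (A[X] ⧸ Ideal.span {C a * X - C b}),
      UniqueFactorizationMonoid (A[X] ⧸ Ideal.span {C a * X - C b}) := by
  have hg := prime_C_mul_X_sub_C ha hab
  have : (Ideal.span {C a * X - C b}).IsPrime := (Ideal.span_singleton_prime hg.ne_zero).mpr hg
  exact ⟨inferInstance, uniqueFactorizationMonoid_of_exists_pow_mul_eq_map
    (injective_algebraMap_quotient_C_mul_X_sub_C ha b)
    (exists_pow_mul_eq_algebraMap_quotient_C_mul_X_sub_C a b)
    (prime_algebraMap_quotient_C_mul_X_sub_C ha habprime)⟩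

end Polynomial

theorem stmt_5_general (k : Type*) [Field k]
    (a b : MvPolynomial (Fin 2) k) (ha : a ≠ 0) (hb : b ≠ 0)
    (hrp : Ideal.span {a} ⊓ Ideal.span {b} = Ideal.span {a * b})
    (habprime : (Ideal.span {a} ⊔ Ideal.span {b}).IsPrime) :
    ∃ h : IsDomain ((MvPolynomial (Fin 2) k)[X] ⧸
        (Ideal.span {C a * X - C b} : Ideal (MvPolynomial (Fin 2) k)[X])),
      UniqueFactorizationMonoid ((MvPolynomial (Fin 2) k)[X] ⧸
        (Ideal.span {C a * X - C b} : Ideal (MvPolynomial (Fin 2) k)[X])) :=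
  uniqueFactorizationMonoid_quotient_C_mul_X_sub_C ha
    (isRelPrime_of_span_inf_span_eq_span_mul ha hb hrp) habprime

/-- Samuel's criterion, for `A = k[x,y]`: if `a, b ∈ A` are nonzero,
`aA` is prime, `aA ∩ bA = abA`, and `aA + bA` is prime, then `B = A[X]/(aX - b)`
is a unique factorization domain. -/
theorem stmt_5 (k : Type*) [Field k]
    (a b : MvPolynomial (Fin 2) k) (ha : a ≠ 0) (hb : b ≠ 0)
    (haprime : (Ideal.span {a}).IsPrime)
    (hrp : Ideal.span {a} ⊓ Ideal.span {b} = Ideal.span {a * b})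
    (habprime : (Ideal.span {a} ⊔ Ideal.span {b}).IsPrime) :
    ∃ h : IsDomain ((MvPolynomial (Fin 2) k)[X] ⧸
        (Ideal.span {C a * X - C b} : Ideal (MvPolynomial (Fin 2) k)[X])),
      UniqueFactorizationMonoid ((MvPolynomial (Fin 2) k)[X] ⧸
        (Ideal.span {C a * X - C b} : Ideal (MvPolynomial (Fin 2) k)[X])) :=
  stmt_5_general k a b ha hb hrp habprime
end

section
/- Let k be a field, A = k[x,y] a polynomial ring in two variables, and let a, b ∈ A satisfy A/aA ≅ k[t,t⁻¹] (Laurent polynomial ring), A/bA ≅ k[t], and A/(aA + bA) ≅ k. Define B = A[b/a], the subring of the localization A_a generated by A and b/a. Then the group of units of B equals k*, i.e., B* = A* = k*. -/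
/-!
Since `A/aA ≅ k[t,t⁻¹]` is a domain, `a` is prime, so every unit of `A_a` is `c • aⁿ` with
`c ∈ A* = k*` and `n ∈ ℤ`; if `n ≠ 0`, one of `u, u⁻¹` has a negative exponent and would put `a⁻¹`
into `B`. That `a⁻¹ ∉ A[b/a]` needs only `aA + bA ≠ A`: if `a⁻¹ = p(b/a)` with `deg p = n`
minimal, clearing denominators gives `a · ∑ pᵢ aⁿ⁻ⁱ bⁱ = aⁿ`. Modulo `a` this says that `b` is a
unit (`n = 1`) or that `a ∣ pₙ bⁿ`, hence `a ∣ pₙ` when `a ∤ b`, and then `pₙ (b/a)ⁿ` can be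
rewritten with degree `n - 1`.
-/

open Polynomial in
theorem Polynomial.dvd_eval_scaleRoots_sub_leadingCoeff_mul {R : Type*} [CommRing R]
    (p : R[X]) (a b : R) :
    a ∣ (p.scaleRoots a).eval b - p.leadingCoeff * b ^ p.natDegree := by
  rw [eval_eq_sum_range, natDegree_scaleRoots, Finset.sum_range_succ, coeff_scaleRoots_natDegree,
    add_sub_cancel_right]
  refine Finset.dvd_sum fun i hi => ?_
  rw [coeff_scaleRoots]
  exact ((dvd_pow_self a (by grind)).mul_left _).mul_right _

namespace IsLocalization.Away

open Polynomial

section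

variable {R S : Type*} [CommRing R] [CommRing S] [Algebra R S] {a : R} [IsLocalization.Away a S]

theorem algebraMap_mul_invSelf_mul (b : R) :
    algebraMap R S a * (invSelf a * algebraMap R S b) = algebraMap R S b := by
  rw [← mul_assoc, mul_invSelf, one_mul]

/-- `(p.scaleRoots a).eval b = ∑ pᵢ aⁿ⁻ⁱ bⁱ` is the homogenization of `p` at `(a, b)`. -/
theorem algebraMap_eval_scaleRoots (p : R[X]) (b : R) :
    algebraMap R S ((p.scaleRoots a).eval b) =
      algebraMap R S a ^ p.natDegree * aeval (invSelf a * algebraMap R S b) p := by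
  rw [aeval_def, ← scaleRoots_eval₂_mul, algebraMap_mul_invSelf_mul, eval₂_at_apply]

theorem aeval_eraseLead_add_C_mul_X_pow {p : R[X]} {b q : R} {m : ℕ} (hn : p.natDegree = m + 1)
    (hq : p.leadingCoeff = a * q) :
    aeval (invSelf a * algebraMap R S b) (p.eraseLead + C (q * b) * X ^ m) =
      aeval (invSelf a * algebraMap R S b) p := by
  conv_rhs => rw [← eraseLead_add_C_mul_X_pow p]
  have hx := algebraMap_mul_invSelf_mul (S := S) (a := a) b
  set x := invSelf a * algebraMap R S b
  clear_value x
  simp only [hn, hq, map_add, map_mul, aeval_C, aeval_X_pow]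
  linear_combination (-(algebraMap R S q * x ^ m)) * hx

theorem le_of_mul_pow_eq_of_invSelf_notMem {B : Subalgebra R S} (hB : invSelf a ∉ B) {z : S}
    (hz : z ∈ B) {c : Rˣ} {m n : ℕ}
    (h : z * algebraMap R S a ^ m = algebraMap R S (c * a ^ n)) : m ≤ n := by
  by_contra! hnm
  obtain ⟨t, rfl⟩ := Nat.exists_eq_add_of_lt hnm
  have hzc : z * algebraMap R S a ^ (t + 1) = algebraMap R S c :=
    (algebraMap_pow_isUnit a n).mul_right_cancel (by rw [map_mul, map_pow] at h; rw [← h]; ring)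
  have hc : algebraMap R S c * algebraMap R S ↑c⁻¹ = 1 := by
    rw [← map_mul, Units.mul_inv, map_one]
  have hinv : invSelf a = z * algebraMap R S (↑c⁻¹ * a ^ t) := by
    rw [map_mul, map_pow]
    linear_combination (-invSelf a) * hc - (algebraMap R S ↑c⁻¹ * invSelf a) * hzc
      + (z * algebraMap R S ↑c⁻¹ * algebraMap R S a ^ t) * mul_invSelf (S := S) a
  exact hB (hinv ▸ mul_mem hz (B.algebraMap_mem _))

end

variable {R S : Type*} [CommRing R] [IsDomain R] [CommRing S] [Algebra R S] {a b : R}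
  [IsLocalization.Away a S]

theorem aeval_ne_invSelf (ha : Prime a) (hab : Ideal.span {a} ⊔ Ideal.span {b} ≠ ⊤)
    (hb : ¬ a ∣ b) (p : R[X]) : aeval (invSelf a * algebraMap R S b) p ≠ invSelf a := by
  induction hn : p.natDegree using Nat.strong_induction_on generalizing p with
  | _ n ih =>
  intro hp
  have key : a * (p.scaleRoots a).eval b = a ^ n := by
    apply IsLocalization.injective S (powers_le_nonZeroDivisors_of_noZeroDivisors ha.ne_zero)
    rw [map_mul, algebraMap_eval_scaleRoots, hp, hn, map_pow, mul_left_comm, mul_invSelf, mul_one]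
  have hdvd := dvd_eval_scaleRoots_sub_leadingCoeff_mul p a b
  rw [hn] at hdvd
  rcases n with _ | _ | m
  · exact ha.not_isUnit (IsUnit.of_mul_eq_one _ (by simpa using key))
  · rw [zero_add, pow_one, mul_eq_left₀ ha.ne_zero] at key
    rw [key, zero_add, pow_one] at hdvd
    refine hab ((Ideal.eq_top_iff_one _).mpr ?_)
    rw [← sub_add_cancel 1 (p.leadingCoeff * b)]
    exact Ideal.add_mem _ (Ideal.mem_sup_left (Ideal.mem_span_singleton.mpr hdvd))
      (Ideal.mem_sup_right (Ideal.mem_span_singleton.mpr (dvd_mul_left b _)))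
  · rw [pow_succ', mul_right_inj' ha.ne_zero] at key
    rw [key] at hdvd
    have hlc : a ∣ p.leadingCoeff * b ^ (m + 2) := by
      simpa using (dvd_pow_self a (Nat.succ_ne_zero m)).sub hdvd
    obtain ⟨q, hq⟩ := (ha.dvd_or_dvd hlc).resolve_right (fun h => hb (ha.dvd_of_dvd_pow h))
    refine ih _ ?_ (p.eraseLead + C (q * b) * X ^ (m + 1)) rfl ?_
    · refine (natDegree_add_le _ _).trans_lt (max_lt ?_ ?_)
      · have := eraseLead_natDegree_le p
        omega
      · exact (natDegree_C_mul_X_pow_le _ _).trans_lt (Nat.lt_succ_self _)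
    · rw [aeval_eraseLead_add_C_mul_X_pow hn hq, hp]

theorem invSelf_notMem_adjoin (ha : Prime a) (hab : Ideal.span {a} ⊔ Ideal.span {b} ≠ ⊤) :
    invSelf a ∉ Algebra.adjoin R {invSelf a * algebraMap R S b} := by
  rw [Algebra.adjoin_singleton_eq_range_aeval]
  rintro ⟨p, hp⟩
  by_cases hb : a ∣ b
  · obtain ⟨c, rfl⟩ := hb
    rw [AlgHom.toRingHom_eq_coe, RingHom.coe_coe, map_mul, ← mul_assoc,
      mul_comm (invSelf a), mul_invSelf, one_mul,
      aeval_algebraMap_apply_eq_algebraMap_eval] at hp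
    have hr : algebraMap R S (a * p.eval c) = algebraMap R S 1 := by
      rw [map_mul, hp, mul_invSelf, map_one]
    exact ha.not_isUnit (IsUnit.of_mul_eq_one _
      (IsLocalization.injective S (powers_le_nonZeroDivisors_of_noZeroDivisors ha.ne_zero) hr))
  · exact aeval_ne_invSelf ha hab hb p hp

theorem exists_mul_pow_eq_of_isUnit (ha : Prime a) {z : S} (hz : IsUnit z) :
    ∃ (c : Rˣ) (m n : ℕ), z * algebraMap R S a ^ m = algebraMap R S (c * a ^ n) := by
  obtain ⟨m, f, hf⟩ := surj a z
  obtain ⟨N, hN⟩ := (algebraMap_isUnit_iff a).mp (hf ▸ hz.mul (algebraMap_pow_isUnit a m))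
  obtain ⟨n, -, c, hc⟩ := (dvd_prime_pow ha N).mp hN
  refine ⟨c⁻¹, m, n, ?_⟩
  rw [hf, ← hc, mul_left_comm, Units.inv_mul, mul_one]

theorem exists_unit_eq_algebraMap_of_invSelf_notMem (ha : Prime a) {B : Subalgebra R S}
    (hB : invSelf a ∉ B) (u : Bˣ) : ∃ c : Rˣ, ((u : B) : S) = algebraMap R S c := by
  have huv : ((u : B) : S) * ((u⁻¹ : Bˣ) : B) = 1 := congrArg Subtype.val u.mul_inv
  obtain ⟨c, m, n, h⟩ := exists_mul_pow_eq_of_isUnit ha (IsUnit.of_mul_eq_one _ huv)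
  have hc : algebraMap R S c * algebraMap R S ↑c⁻¹ = 1 := by
    rw [← map_mul, Units.mul_inv, map_one]
  have h' : ((u⁻¹ : Bˣ) : S) * algebraMap R S a ^ n = algebraMap R S (↑c⁻¹ * a ^ m) := by
    rw [map_mul, map_pow] at h ⊢
    linear_combination (-(((u⁻¹ : Bˣ) : S) * algebraMap R S a ^ n)) * hc
      - (algebraMap R S ↑c⁻¹ * ((u⁻¹ : Bˣ) : S)) * h
      + (algebraMap R S ↑c⁻¹ * algebraMap R S a ^ m) * huv
  obtain rfl : m = n := le_antisymm (le_of_mul_pow_eq_of_invSelf_notMem hB (u : B).2 h)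
    (le_of_mul_pow_eq_of_invSelf_notMem hB (u⁻¹ : Bˣ).1.2 h')
  exact ⟨c, (algebraMap_pow_isUnit a m).mul_right_cancel (by rw [h, map_mul, map_pow])⟩

end IsLocalization.Away

open MvPolynomial

theorem stmt_6_general (k : Type*) [Field k]
    (a b : MvPolynomial (Fin 2) k)
    (hA : Nonempty ((MvPolynomial (Fin 2) k ⧸ Ideal.span {a}) ≃ₐ[k] LaurentPolynomial k))
    (hAB : Nonempty ((MvPolynomial (Fin 2) k ⧸ (Ideal.span {a} ⊔ Ideal.span {b})) ≃ₐ[k] k))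
    (B : Subalgebra (MvPolynomial (Fin 2) k) (Localization.Away a))
    (hBdef : B = Algebra.adjoin (MvPolynomial (Fin 2) k)
      {IsLocalization.Away.invSelf a * algebraMap (MvPolynomial (Fin 2) k) (Localization.Away a) b}) :
    ∀ u : (↥B)ˣ, ∃ c : kˣ,
      ((u : ↥B) : Localization.Away a)
        = algebraMap (MvPolynomial (Fin 2) k) (Localization.Away a) (C (c : k)) := by
  intro u
  rcases eq_or_ne a 0 with rfl | ha0
  · have : Subsingleton (Localization.Away (0 : MvPolynomial (Fin 2) k)) :=
      IsLocalization.subsingleton (M := Submonoid.powers (0 : MvPolynomial (Fin 2) k))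
        ⟨1, pow_one 0⟩
    exact ⟨1, Subsingleton.elim _ _⟩
  obtain ⟨eA⟩ := hA
  obtain ⟨eAB⟩ := hAB
  have ha : Prime a := (Ideal.span_singleton_prime ha0).mp <|
    (Ideal.Quotient.isDomain_iff_prime _).mp (eA.toMulEquiv.isDomain _)
  have hab : Ideal.span {a} ⊔ Ideal.span {b} ≠ ⊤ :=
    Ideal.Quotient.nontrivial_iff.mp eAB.toEquiv.nontrivial
  obtain ⟨c, hc⟩ :=
    IsLocalization.Away.exists_unit_eq_algebraMap_of_invSelf_notMem ha
      (hBdef ▸ IsLocalization.Away.invSelf_notMem_adjoin ha hab) u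
  obtain ⟨r, hr, hcr⟩ := isUnit_iff_eq_C_of_isReduced.mp c.isUnit
  exact ⟨hr.unit, by rw [hc, hcr, IsUnit.unit_spec]⟩

/-- Let `A = k[x,y]` and `a, b ∈ A` with `A/aA ≅ k[t,t⁻¹]`, `A/bA ≅ k[t]`
and `A/(aA+bA) ≅ k`. Then the units of `B = A[b/a] ⊆ A_a` are exactly `k*`. -/
theorem stmt_6 (k : Type*) [Field k]
    (a b : MvPolynomial (Fin 2) k)
    (hA : Nonempty ((MvPolynomial (Fin 2) k ⧸ Ideal.span {a}) ≃ₐ[k] LaurentPolynomial k))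
    (hB : Nonempty ((MvPolynomial (Fin 2) k ⧸ Ideal.span {b}) ≃ₐ[k] Polynomial k))
    (hAB : Nonempty ((MvPolynomial (Fin 2) k ⧸ (Ideal.span {a} ⊔ Ideal.span {b})) ≃ₐ[k] k))
    (B : Subalgebra (MvPolynomial (Fin 2) k) (Localization.Away a))
    (hBdef : B = Algebra.adjoin (MvPolynomial (Fin 2) k)
      {IsLocalization.Away.invSelf a * algebraMap (MvPolynomial (Fin 2) k) (Localization.Away a) b}) :
    ∀ u : (↥B)ˣ, ∃ c : kˣ,
      ((u : ↥B) : Localization.Away a)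
        = algebraMap (MvPolynomial (Fin 2) k) (Localization.Away a) (C (c : k)) :=
  stmt_6_general k a b hA hAB B hBdef
end

section
/- Let R be an integral domain such that every non-negative degree function on R is trivial (R is degree-rigid). Then for every n ≥ 0, the degree-neutral invariant of the polynomial ring R[x₁,...,xₙ] equals R, i.e., Δ⁰(R^[n]) = R. -/
/-!
Every non-negative degree function on `R[x₁,…,xₙ]` restricts, through the injective map `C`,
to one on `R`, and is therefore trivial on constants. Conversely the total degree (with
`deg 0 = ⊥`) is a non-negative degree function on `R[x₁,…,xₙ]` because `R` is a domain, and a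
polynomial of total degree zero is a constant.
-/

/-- A non-negative degree function on a commutative ring. -/
def IsNNDegFun {S : Type*} [CommRing S] (deg : S → WithBot ℕ) : Prop :=
  (∀ f : S, deg f = ⊥ ↔ f = 0) ∧
  (∀ f g : S, deg (f * g) = deg f + deg g) ∧
  (∀ f g : S, deg (f + g) ≤ max (deg f) (deg g))

open MvPolynomial

/-- The degree-neutral invariant `Δ⁰(S)`. -/
def degreeNeutral (S : Type*) [CommRing S] : Set S :=
  {s | ∀ deg : S → WithBot ℕ, IsNNDegFun deg → deg s ≤ 0}

theorem IsNNDegFun.comp {R S : Type*} [CommRing R] [CommRing S] {deg : S → WithBot ℕ}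
    (hdeg : IsNNDegFun deg) {f : R →+* S} (hf : Function.Injective f) :
    IsNNDegFun (deg ∘ f) := by
  obtain ⟨hbot, hmul, hadd⟩ := hdeg
  refine ⟨fun r => ?_, fun r s => ?_, fun r s => ?_⟩
  · rw [Function.comp_apply, hbot, map_eq_zero_iff f hf]
  · simp only [Function.comp_apply, map_mul, hmul]
  · simp only [Function.comp_apply, map_add, hadd]

theorem map_mem_degreeNeutral {R S : Type*} [CommRing R] [CommRing S] {f : R →+* S}
    (hf : Function.Injective f) {r : R} (hr : r ∈ degreeNeutral R) :
    f r ∈ degreeNeutral S :=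
  fun _ hdeg => hr _ (hdeg.comp hf)

theorem mem_degreeNeutral_of_forall_eq_zero {R : Type*} [CommRing R]
    (hrigid : ∀ deg : R → WithBot ℕ, IsNNDegFun deg → ∀ r : R, r ≠ 0 → deg r = 0) (r : R) :
    r ∈ degreeNeutral R := by
  intro deg hdeg
  rcases eq_or_ne r 0 with rfl | hr
  · exact ((hdeg.1 0).mpr rfl).trans_le bot_le
  · exact (hrigid deg hdeg r hr).le

namespace MvPolynomial

variable {σ R : Type*}

theorem weightedTotalDegree'_add_le [CommSemiring R] {M : Type*} [AddCommMonoid M]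
    [SemilatticeSup M] (w : σ → M) (p q : MvPolynomial σ R) :
    weightedTotalDegree' w (p + q) ≤
      max (weightedTotalDegree' w p) (weightedTotalDegree' w q) := by
  classical
  calc weightedTotalDegree' w (p + q)
      ≤ (p.support ∪ q.support).sup fun s => (Finsupp.weight w s : WithBot M) :=
        Finset.sup_mono support_add
    _ = _ := Finset.sup_union

theorem weightedTotalDegree'_one_of_ne_zero [CommSemiring R] {p : MvPolynomial σ R}
    (hp : p ≠ 0) : weightedTotalDegree' (1 : σ → ℕ) p = p.totalDegree := by
  rw [weightedTotalDegree_coe 1 p hp, weightedTotalDegree_one]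
  rfl

theorem isNNDegFun_weightedTotalDegree'_one [CommRing R] [IsDomain R] :
    IsNNDegFun (weightedTotalDegree' (1 : σ → ℕ) : MvPolynomial σ R → WithBot ℕ) := by
  refine ⟨weightedTotalDegree'_eq_bot_iff 1, fun p q => ?_, weightedTotalDegree'_add_le 1⟩
  rcases eq_or_ne p 0 with rfl | hp
  · simp only [zero_mul, weightedTotalDegree'_zero, WithBot.bot_add]
  rcases eq_or_ne q 0 with rfl | hq
  · simp only [mul_zero, weightedTotalDegree'_zero, WithBot.add_bot]
  rw [weightedTotalDegree'_one_of_ne_zero hp, weightedTotalDegree'_one_of_ne_zero hq,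
    weightedTotalDegree'_one_of_ne_zero (mul_ne_zero hp hq), totalDegree_mul_of_isDomain hp hq,
    Nat.cast_add]

theorem degreeNeutral_subset_range_C [CommRing R] [IsDomain R] :
    degreeNeutral (MvPolynomial σ R) ⊆ Set.range C := by
  intro p hp
  rcases eq_or_ne p 0 with rfl | hp0
  · exact ⟨0, C_0⟩
  have hdeg : (p.totalDegree : WithBot ℕ) ≤ 0 := by
    rw [← weightedTotalDegree'_one_of_ne_zero hp0]
    exact hp _ isNNDegFun_weightedTotalDegree'_one
  have htot : p.totalDegree = 0 := Nat.le_zero.mp (WithBot.coe_le_coe.mp hdeg)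
  exact ⟨p.coeff 0, (totalDegree_eq_zero_iff_eq_C.mp htot).symm⟩

end MvPolynomial

/-- If every non-negative degree function on a domain `R` is trivial
(`R` is degree-rigid), then for each `n ≥ 0` the degree-neutral invariant of
`R[x₁,…,xₙ]` equals `R`: the set of polynomials `p` with `deg p ≤ 0` for every
non-negative degree function `deg` is exactly the set of constants. -/
theorem stmt_11 (R : Type*) [CommRing R] [IsDomain R]
    (hrigid : ∀ deg : R → WithBot ℕ, IsNNDegFun deg → ∀ r : R, r ≠ 0 → deg r = 0)
    (n : ℕ) :
    {p : MvPolynomial (Fin n) R |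
        ∀ deg : MvPolynomial (Fin n) R → WithBot ℕ, IsNNDegFun deg → deg p ≤ 0}
      = Set.range (MvPolynomial.C : R → MvPolynomial (Fin n) R) := by
  refine degreeNeutral_subset_range_C.antisymm ?_
  rintro _ ⟨r, rfl⟩
  exact map_mem_degreeNeutral (C_injective (Fin n) R)
    (mem_degreeNeutral_of_forall_eq_zero hrigid r)
end

section
/- Let k be a field and n ≥ 1. The ring B_n = k[x, y, u] with u(x^n y - 1) = x - 1 is degree-rigid: every non-negative degree function δ : B_n → ℕ ∪ {-∞} satisfies δ(f) = 0 for all nonzero f ∈ B_n. -/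
open MvPolynomial

namespace IsNNDegFun

variable {S : Type*} [CommRing S] {δ : S → WithBot ℕ}

theorem deg_ne_bot (hδ : IsNNDegFun δ) {f : S} (hf : f ≠ 0) : δ f ≠ ⊥ :=
  fun h => hf ((hδ.1 f).1 h)

theorem deg_nonneg (hδ : IsNNDegFun δ) {f : S} (hf : f ≠ 0) : 0 ≤ δ f := by
  obtain ⟨m, hm⟩ := WithBot.ne_bot_iff_exists.mp (hδ.deg_ne_bot hf)
  rw [← hm]
  exact Nat.WithBot.coe_nonneg

theorem noZeroDivisors (hδ : IsNNDegFun δ) : NoZeroDivisors S where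
  eq_zero_or_eq_zero_of_mul_eq_zero {f g} h := by
    have h' := (hδ.1 (f * g)).2 h
    rw [hδ.2.1] at h'
    simpa only [hδ.1] using WithBot.add_eq_bot.mp h'

theorem deg_one_le (hδ : IsNNDegFun δ) : δ 1 ≤ 0 := by
  have h : δ 1 = δ 1 + δ 1 := by rw [← hδ.2.1, one_mul]
  cases hd : δ 1 with
  | bot => exact bot_le
  | coe m =>
    have hm : m = m + m := by exact_mod_cast hd ▸ h
    rw [show m = 0 by omega]
    rfl

theorem deg_le_zero_of_mul_eq_one (hδ : IsNNDegFun δ) {f g : S} (h : f * g = 1) : δ f ≤ 0 := by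
  rcases eq_or_ne g 0 with rfl | hg
  · have : Subsingleton S := subsingleton_of_zero_eq_one (by rwa [mul_zero] at h)
    rw [Subsingleton.elim f 0, (hδ.1 0).2 rfl]
    exact bot_le
  refine le_of_add_le_of_nonneg_left ?_ (hδ.deg_nonneg hg)
  rw [← hδ.2.1, h]
  exact hδ.deg_one_le

theorem deg_neg_one_le (hδ : IsNNDegFun δ) : δ (-1) ≤ 0 :=
  hδ.deg_le_zero_of_mul_eq_one (by rw [neg_one_mul, neg_neg])

theorem deg_algebraMap_le_zero {K : Type*} [Field K] [Algebra K S] (hδ : IsNNDegFun δ) (r : K) :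
    δ (algebraMap K S r) ≤ 0 := by
  rcases eq_or_ne r 0 with rfl | hr
  · rw [map_zero, (hδ.1 0).2 rfl]
    exact bot_le
  · refine hδ.deg_le_zero_of_mul_eq_one (g := algebraMap K S r⁻¹) ?_
    rw [← map_mul, mul_inv_cancel₀ hr, map_one]

theorem deg_sub_one (hδ : IsNNDegFun δ) {f : S} (hf0 : f ≠ 0) (hf1 : f ≠ 1) :
    δ (f - 1) = δ f := by
  refine le_antisymm ?_ ?_
  · calc δ (f - 1) = δ (f + -1) := by rw [sub_eq_add_neg]
      _ ≤ max (δ f) (δ (-1)) := hδ.2.2 _ _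
      _ = δ f := max_eq_left (hδ.deg_neg_one_le.trans (hδ.deg_nonneg hf0))
  · calc δ f = δ (f - 1 + 1) := by rw [sub_add_cancel]
      _ ≤ max (δ (f - 1)) (δ 1) := hδ.2.2 _ _
      _ = δ (f - 1) := max_eq_left (hδ.deg_one_le.trans (hδ.deg_nonneg (sub_ne_zero.mpr hf1)))

theorem deg_mul_eq_zero_of_mul_mul_sub_one_eq_sub_one (hδ : IsNNDegFun δ) {a b c : S}
    (h : a * (b * c - 1) = b - 1) (hb0 : b ≠ 0) (hb1 : b ≠ 1) (hc : c ≠ 0) : δ (a * c) = 0 := by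
  have := hδ.noZeroDivisors
  have hbc1 : b * c ≠ 1 := by
    intro hbc
    rw [hbc, sub_self, mul_zero, eq_comm, sub_eq_zero] at h
    exact hb1 h
  refine WithBot.add_right_cancel (hδ.deg_ne_bot hb0) ?_
  calc δ (a * c) + δ b = δ a + δ (b * c) := by rw [hδ.2.1, hδ.2.1, add_right_comm, add_assoc]
    _ = δ (b - 1) := by rw [← hδ.deg_sub_one (mul_ne_zero hb0 hc) hbc1, ← hδ.2.1, h]
    _ = 0 + δ b := by rw [hδ.deg_sub_one hb0 hb1, zero_add]

def degLeZero (hδ : IsNNDegFun δ) : Subring S where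
  carrier := {f | δ f ≤ 0}
  mul_mem' {f g} hf hg := by
    rw [Set.mem_ofPred_eq, hδ.2.1]
    exact add_nonpos hf hg
  one_mem' := hδ.deg_one_le
  add_mem' {f g} hf hg := (hδ.2.2 f g).trans (max_le hf hg)
  zero_mem' := by
    rw [Set.mem_ofPred_eq, (hδ.1 0).2 rfl]
    exact bot_le
  neg_mem' {f} hf := by
    rw [Set.mem_ofPred_eq, neg_eq_neg_one_mul, hδ.2.1]
    exact add_nonpos hδ.deg_neg_one_le hf

theorem mem_degLeZero (hδ : IsNNDegFun δ) {f : S} : f ∈ hδ.degLeZero ↔ δ f ≤ 0 := Iff.rfl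

theorem mem_degLeZero_of_mul_mem (hδ : IsNNDegFun δ) {f g : S} (hg : g ≠ 0)
    (h : f * g ∈ hδ.degLeZero) : f ∈ hδ.degLeZero := by
  rw [mem_degLeZero, hδ.2.1] at h
  exact le_of_add_le_of_nonneg_left h (hδ.deg_nonneg hg)

theorem mem_degLeZero_of_pow_mul_sub_one_mul_eq_sub_one {n : ℕ} (hδ : IsNNDegFun δ) (hn : 1 ≤ n)
    {x y u : S} (h : (x ^ n * y - 1) * u = x - 1) (hx0 : x ≠ 0) (hx1 : x ≠ 1) (hy : y ≠ 0)
    (hu1 : u ≠ 1) : x ∈ hδ.degLeZero ∧ y ∈ hδ.degLeZero ∧ u ∈ hδ.degLeZero := by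
  have := hδ.noZeroDivisors
  have hu0 : u ≠ 0 := by
    rintro rfl
    rw [mul_zero, eq_comm, sub_eq_zero] at h
    exact hx1 h
  obtain ⟨m, rfl⟩ : ∃ m, n = m + 1 := ⟨n - 1, by omega⟩
  have hxmy : x ^ m * y ≠ 0 := mul_ne_zero (pow_ne_zero m hx0) hy
  have huxmy : u * (x ^ m * y) ∈ hδ.degLeZero :=
    (hδ.deg_mul_eq_zero_of_mul_mul_sub_one_eq_sub_one (by rw [← h]; ring) hx0 hx1 hxmy).le
  have hxmy_mem : x ^ m * y ∈ hδ.degLeZero :=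
    hδ.mem_degLeZero_of_mul_mem hu0 (mul_comm u _ ▸ huxmy)
  refine ⟨?_, hδ.mem_degLeZero_of_mul_mem (pow_ne_zero m hx0) (mul_comm (x ^ m) y ▸ hxmy_mem),
    hδ.mem_degLeZero_of_mul_mem hxmy huxmy⟩
  rcases m with _ | m
  · have hswap : x * (u * y - 1) = u - 1 := by
      rw [pow_one] at h
      linear_combination h
    exact hδ.mem_degLeZero_of_mul_mem hy
      (hδ.deg_mul_eq_zero_of_mul_mul_sub_one_eq_sub_one hswap hu0 hu1 hy).le
  · exact hδ.mem_degLeZero_of_mul_mem (mul_ne_zero (pow_ne_zero m hx0) hy)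
      (by rwa [pow_succ, mul_comm _ x, mul_assoc] at hxmy_mem)

theorem deg_eq_zero_of_degLeZero_eq_top (hδ : IsNNDegFun δ) (htop : hδ.degLeZero = ⊤) {f : S}
    (hf : f ≠ 0) : δ f = 0 :=
  le_antisymm (htop ▸ Subring.mem_top f : f ∈ hδ.degLeZero) (hδ.deg_nonneg hf)

end IsNNDegFun

namespace Polynomial

theorem subring_eq_top_of_C_mem_of_X_mem {R : Type*} [CommRing R] {T : Subring (Polynomial R)}
    (hC : ∀ a, C a ∈ T) (hX : X ∈ T) : T = ⊤ := by
  refine T.eq_top_iff'.mpr fun p => ?_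
  induction p using Polynomial.induction_on with
  | C a => exact hC a
  | add p q hp hq => exact T.add_mem hp hq
  | monomial m a hp =>
    rw [pow_succ, ← mul_assoc]
    exact T.mul_mem hp hX

theorem mk_ne_zero_of_eval₂_div_ne_zero {R K : Type*} [CommRing R] [Field K]
    (ι : R →+* K) {a : R} (b : R) (ha : ι a ≠ 0) {p : Polynomial R}
    (hp : p.eval₂ ι (ι b / ι a) ≠ 0) :
    Ideal.Quotient.mk (Ideal.span {C a * X - C b}) p ≠ 0 := by
  rw [Ne, Ideal.Quotient.eq_zero_iff_mem, Ideal.mem_span_singleton']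
  rintro ⟨q, rfl⟩
  apply hp
  rw [eval₂_mul, eval₂_sub, eval₂_mul, eval₂_C, eval₂_C, eval₂_X, mul_div_cancel₀ _ ha, sub_self,
    mul_zero]

theorem mk_comp_C_injective {R : Type*} [CommRing R] [IsDomain R] {a : R} (b : R) (ha : a ≠ 0) :
    Function.Injective ((Ideal.Quotient.mk (Ideal.span {C a * X - C b})).comp C) := by
  set ι := algebraMap R (FractionRing R)
  have hι : Function.Injective ι := IsFractionRing.injective R (FractionRing R)
  refine (injective_iff_map_eq_zero' _).mpr fun p => ⟨fun hp => ?_, fun hp => by rw [hp, map_zero]⟩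
  by_contra hp0
  refine mk_ne_zero_of_eval₂_div_ne_zero ι b ((map_ne_zero_iff ι hι).mpr ha) ?_ hp
  rwa [eval₂_C, map_ne_zero_iff ι hι]

theorem mk_X_ne_one {R : Type*} [CommRing R] [IsDomain R] {a b : R} (ha : a ≠ 0) (hab : b ≠ a) :
    Ideal.Quotient.mk (Ideal.span {C a * X - C b}) X ≠ 1 := by
  set ι := algebraMap R (FractionRing R)
  have hι : Function.Injective ι := IsFractionRing.injective R (FractionRing R)
  have ha' : ι a ≠ 0 := (map_ne_zero_iff ι hι).mpr ha
  rw [Ne, ← sub_eq_zero, ← map_one (Ideal.Quotient.mk _), ← map_sub]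
  refine mk_ne_zero_of_eval₂_div_ne_zero ι b ha' ?_
  rw [eval₂_sub, eval₂_X, eval₂_one, sub_ne_zero, Ne, div_eq_one_iff_eq ha']
  exact hι.ne hab

end Polynomial

theorem MvPolynomial.subring_eq_top_of_C_mem_of_X_mem {σ R : Type*} [CommRing R]
    {T : Subring (MvPolynomial σ R)} (hC : ∀ a, C a ∈ T) (hX : ∀ i, X i ∈ T) : T = ⊤ := by
  refine T.eq_top_iff'.mpr fun p => ?_
  induction p using MvPolynomial.induction_on with
  | C a => exact hC a
  | add p q hp hq => exact T.add_mem hp hq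
  | mul_X p i hp => exact T.mul_mem hp (hX i)

theorem Ideal.Quotient.subring_eq_top_of_generators_mem {σ k : Type*} [CommRing k]
    {I : Ideal (Polynomial (MvPolynomial σ k))} {T : Subring (Polynomial (MvPolynomial σ k) ⧸ I)}
    (hC : ∀ r : k, Ideal.Quotient.mk I (Polynomial.C (C r)) ∈ T)
    (hX : ∀ i, Ideal.Quotient.mk I (Polynomial.C (X i)) ∈ T)
    (hu : Ideal.Quotient.mk I Polynomial.X ∈ T) : T = ⊤ := by
  have hcoeff : T.comap ((Ideal.Quotient.mk I).comp Polynomial.C) = ⊤ :=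
    MvPolynomial.subring_eq_top_of_C_mem_of_X_mem hC hX
  have hpoly : T.comap (Ideal.Quotient.mk I) = ⊤ :=
    Polynomial.subring_eq_top_of_C_mem_of_X_mem
      (fun a => (hcoeff ▸ Subring.mem_top a : a ∈ T.comap _)) hu
  refine T.eq_top_iff'.mpr fun f => ?_
  obtain ⟨p, rfl⟩ := Ideal.Quotient.mk_surjective f
  exact (hpoly ▸ Subring.mem_top p : p ∈ T.comap _)

/-- For a field `k` and `n ≥ 1`, the ring
`B_n = k[x,y][T]/((xⁿy - 1)T - (x - 1))` (that is, `k[x,y,u]` with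
`u(xⁿy-1) = x-1`) is degree-rigid: every non-negative degree function `δ`
on `B_n` satisfies `δ(f) = 0` for all nonzero `f`. -/
theorem stmt_14 (k : Type*) [Field k] (n : ℕ) (hn : 1 ≤ n)
    (I : Ideal (Polynomial (MvPolynomial (Fin 2) k)))
    (hI : I = Ideal.span {Polynomial.C ((X 0) ^ n * X 1 - 1) * Polynomial.X
      - Polynomial.C ((X 0) - 1)}) :
    ∀ δ : (Polynomial (MvPolynomial (Fin 2) k) ⧸ I) → WithBot ℕ,
      IsNNDegFun δ → ∀ f : Polynomial (MvPolynomial (Fin 2) k) ⧸ I, f ≠ 0 → δ f = 0 := by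
  subst hI
  intro δ hδ f hf
  have ha : (X 0 ^ n * X 1 - 1 : MvPolynomial (Fin 2) k) ≠ 0 := fun h => by
    simpa using congrArg constantCoeff h
  have hC := Polynomial.mk_comp_C_injective (X 0 - 1) ha
  have hx0 := hC.ne (X_ne_zero 0)
  have hx1 := hC.ne (show (X 0 : MvPolynomial (Fin 2) k) ≠ 1 from fun h => by
    simpa using congrArg constantCoeff h)
  have hy0 := hC.ne (X_ne_zero 1)
  simp only [RingHom.coe_comp, Function.comp_apply, map_zero, map_one] at hx0 hx1 hy0
  have hu1 := Polynomial.mk_X_ne_one ha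
    (show (X 0 - 1 : MvPolynomial (Fin 2) k) ≠ X 0 ^ n * X 1 - 1 from fun h => by
      simpa using congrArg (eval ![1, 0]) h)
  have hrel := Ideal.Quotient.eq_zero_iff_mem.mpr (Ideal.mem_span_singleton_self
    (Polynomial.C (X 0 ^ n * X 1 - 1 : MvPolynomial (Fin 2) k) * Polynomial.X
      - Polynomial.C (X 0 - 1)))
  simp only [map_sub, map_mul, map_pow, map_one, sub_eq_zero] at hrel
  obtain ⟨hx, hy, hu⟩ :=
    hδ.mem_degLeZero_of_pow_mul_sub_one_mul_eq_sub_one hn hrel hx0 hx1 hy0 hu1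
  refine hδ.deg_eq_zero_of_degLeZero_eq_top
    (Ideal.Quotient.subring_eq_top_of_generators_mem ?_ (Fin.forall_fin_two.mpr ⟨hx, hy⟩) hu) hf
  exact hδ.deg_algebraMap_le_zero
end

section
/- Let k be a field, A = k[x,y], and for n ≥ 1 let a = x^n y - 1. Then the localization A_a[x⁻¹] = k[x, x⁻¹, y, (x^n y - 1)⁻¹] is isomorphic as a k-algebra to the Laurent polynomial ring in two variables k[s, s⁻¹, t, t⁻¹]. -/
open MvPolynomial AddMonoidAlgebra

/-! Sending `x ↦ s` and `y ↦ s⁻ⁿ(t + 1)` defines a `k`-algebra map `φ : k[x, y] → k[s^±, t^±]`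
with `φ(x) = s` and `φ(xⁿy - 1) = t`, so `φ` inverts `x` and `xⁿy - 1`. Since
`φ(xᵃ(xⁿy - 1)ᵇ) = sᵃtᵇ` for `a, b ≥ 0`, every Laurent monomial becomes a value of `φ` after
multiplication by such a monomial. Finally `φ` is injective: followed by `s ↦ x, t ↦ xⁿy - 1`
into the fraction field of `k[x, y]` it becomes the canonical inclusion. Hence `φ` exhibits
`k[s^±, t^±]` as the localization of `k[x, y]` at the monoid generated by `x` and `xⁿy - 1`. -/

noncomputable section

theorem RingHom.exists_mul_eq_add {R S : Type*} [CommSemiring R] [CommSemiring S]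
    {f : R →+* S} {M : Submonoid R} {z w : S} (hz : ∃ x : R × M, z * f x.2 = f x.1)
    (hw : ∃ x : R × M, w * f x.2 = f x.1) : ∃ x : R × M, (z + w) * f x.2 = f x.1 := by
  obtain ⟨⟨p, m⟩, hpm⟩ := hz
  obtain ⟨⟨q, l⟩, hql⟩ := hw
  refine ⟨⟨p * l + q * m, m * l⟩, ?_⟩
  simp only [Submonoid.coe_mul, map_add, map_mul, ← hpm, ← hql]
  ring

namespace AddMonoidAlgebra

theorem isUnit_single_one {k G : Type*} [Semiring k] [AddGroup G] (g : G) :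
    IsUnit (single g (1 : k)) :=
  (Group.isUnit (Multiplicative.ofAdd g)).map (of k G)

variable {k B : Type*} [CommSemiring k] [CommSemiring B] [Algebra k B]

def liftUnitsPair (u v : Bˣ) : k[ℤ × ℤ] →ₐ[k] B :=
  lift k B (ℤ × ℤ) <| (Units.coeHom B).comp
    { toFun := fun g ↦ u ^ g.toAdd.1 * v ^ g.toAdd.2
      map_one' := by simp
      map_mul' := fun g h ↦ by
        simp only [toAdd_mul, Prod.fst_add, Prod.snd_add, zpow_add, mul_mul_mul_comm] }

@[simp]
theorem liftUnitsPair_single (u v : Bˣ) (g : ℤ × ℤ) (r : k) :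
    liftUnitsPair u v (single g r) = r • ((u ^ g.1 * v ^ g.2 : Bˣ) : B) := by
  simp [liftUnitsPair, lift_single]

end AddMonoidAlgebra

namespace MvPolynomial

section CommRing

variable (k : Type*) [CommRing k] (n : ℕ)

def laurentEmbedding : MvPolynomial (Fin 2) k →ₐ[k] k[ℤ × ℤ] :=
  aeval ![single ((1 : ℤ), (0 : ℤ)) 1, single (-(n : ℤ), 0) 1 * (single (0, 1) 1 + 1)]

theorem laurentEmbedding_C (r : k) : laurentEmbedding k n (C r) = single 0 r := by
  simp [laurentEmbedding, coe_algebraMap]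

theorem laurentEmbedding_X_zero : laurentEmbedding k n (X 0) = single (1, 0) 1 := by
  simp [laurentEmbedding]

theorem laurentEmbedding_X_pow_mul_X_sub_one :
    laurentEmbedding k n (X 0 ^ n * X 1 - 1) = single (0, 1) 1 := by
  have : laurentEmbedding k n (X 0 ^ n * X 1) = single (0, 1) 1 + 1 := by
    simp [laurentEmbedding, ← mul_assoc, Prod.mk_zero_zero, ← AddMonoidAlgebra.one_def]
  rw [map_sub, this, map_one, add_sub_cancel_right]

theorem laurentEmbedding_X_pow_mul_pow (i j : ℕ) :
    laurentEmbedding k n (X 0 ^ i * (X 0 ^ n * X 1 - 1) ^ j) = single ((i : ℤ), (j : ℤ)) 1 := by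
  simp [laurentEmbedding_X_zero, laurentEmbedding_X_pow_mul_X_sub_one]

theorem isUnit_laurentEmbedding {s : MvPolynomial (Fin 2) k}
    (hs : s ∈ Submonoid.closure {X 0 ^ n * X 1 - 1, X 0}) : IsUnit (laurentEmbedding k n s) := by
  suffices Submonoid.closure {X 0 ^ n * X 1 - 1, X 0} ≤
      (IsUnit.submonoid k[ℤ × ℤ]).comap (laurentEmbedding k n) from this hs
  simp only [Submonoid.closure_le, Set.insert_subset_iff, Set.singleton_subset_iff,
    SetLike.mem_coe, Submonoid.mem_comap, IsUnit.mem_submonoid_iff,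
    laurentEmbedding_X_pow_mul_X_sub_one, laurentEmbedding_X_zero]
  exact ⟨isUnit_single_one _, isUnit_single_one _⟩

theorem exists_mul_laurentEmbedding_eq (z : k[ℤ × ℤ]) :
    ∃ x : MvPolynomial (Fin 2) k ×
        Submonoid.closure {(X 0 : MvPolynomial (Fin 2) k) ^ n * X 1 - 1, X 0},
      z * laurentEmbedding k n x.2 = laurentEmbedding k n x.1 := by
  induction z using induction_linear with
  | zero => exact ⟨(0, 1), by simp⟩
  | add z w hz hw => exact RingHom.exists_mul_eq_add hz hw
  | single g r =>
    have hmem (i j : ℕ) : X 0 ^ i * (X 0 ^ n * X 1 - 1) ^ j ∈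
        Submonoid.closure {(X 0 : MvPolynomial (Fin 2) k) ^ n * X 1 - 1, X 0} :=
      mul_mem (pow_mem (Submonoid.subset_closure (by simp)) _)
        (pow_mem (Submonoid.subset_closure (by simp)) _)
    refine ⟨(C r * (X 0 ^ g.1.toNat * (X 0 ^ n * X 1 - 1) ^ g.2.toNat),
      ⟨_, hmem (-g.1).toNat (-g.2).toNat⟩), ?_⟩
    dsimp only
    rw [map_mul _ (C r), laurentEmbedding_X_pow_mul_pow, laurentEmbedding_X_pow_mul_pow, laurentEmbedding_C,
      single_mul_single, single_mul_single, zero_add, mul_one]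
    congr 1
    ext <;> simp <;> omega

end CommRing

section IsDomain

variable (k : Type*) [CommRing k] [IsDomain k] (n : ℕ)

theorem laurentEmbedding_injective : Function.Injective (laurentEmbedding k n) := by
  let F := FractionRing (MvPolynomial (Fin 2) k)
  have hne {p : MvPolynomial (Fin 2) k} (hp : p ≠ 0) : algebraMap _ F p ≠ 0 :=
    (map_ne_zero_iff _ (IsFractionRing.injective _ F)).mpr hp
  have ha : X 0 ^ n * X 1 - 1 ≠ (0 : MvPolynomial (Fin 2) k) := fun h ↦ by
    simpa using congrArg constantCoeff h
  let ψ := liftUnitsPair (k := k) (Units.mk0 _ (hne (X_ne_zero 0))) (Units.mk0 _ (hne ha))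
  have hψ : ψ.comp (laurentEmbedding k n) = IsScalarTower.toAlgHom k _ F := by
    refine algHom_ext fun i ↦ ?_
    fin_cases i <;> simp [ψ, laurentEmbedding]
  refine Function.Injective.of_comp (f := ψ) ?_
  rw [← AlgHom.coe_comp, hψ]
  exact IsFractionRing.injective _ F

theorem isLocalizationMap_laurentEmbedding :
    (Submonoid.closure {(X 0 : MvPolynomial (Fin 2) k) ^ n * X 1 - 1, X 0}).IsLocalizationMap
      (laurentEmbedding k n) where
  map_units s := isUnit_laurentEmbedding k n s.2
  surj := exists_mul_laurentEmbedding_eq k n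
  exists_of_eq h := ⟨1, congrArg _ (laurentEmbedding_injective k n h)⟩

end IsDomain

end MvPolynomial

theorem stmt_19_general (k : Type*) [Field k] (n : ℕ)
    (L : Type*) [CommRing L] [Algebra (MvPolynomial (Fin 2) k) L]
    [IsLocalization
      (Submonoid.closure {(X 0 : MvPolynomial (Fin 2) k) ^ n * X 1 - 1, X 0}) L]
    [Algebra k L] [IsScalarTower k (MvPolynomial (Fin 2) k) L] :
    Nonempty (L ≃ₐ[k] AddMonoidAlgebra k (ℤ × ℤ)) := by
  let := (laurentEmbedding k n).toAlgebra
  have : IsScalarTower k (MvPolynomial (Fin 2) k) k[ℤ × ℤ] :=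
    .of_algebraMap_eq' (laurentEmbedding k n).comp_algebraMap.symm
  set S := Submonoid.closure {(X 0 : MvPolynomial (Fin 2) k) ^ n * X 1 - 1, X 0}
  have : IsLocalization S k[ℤ × ℤ] :=
    (isLocalization_iff_isLocalizationMap _ _).mpr (isLocalizationMap_laurentEmbedding k n)
  exact ⟨(IsLocalization.algEquiv S L k[ℤ × ℤ]).restrictScalars k⟩

/-- Let `A = k[x,y]` and, for `n ≥ 1`, `a = xⁿy - 1`. The localization
`A_a[x⁻¹] = k[x, x⁻¹, y, (xⁿy-1)⁻¹]` (localization of `A` at the multiplicative set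
generated by `a` and `x`) is isomorphic as a `k`-algebra to the Laurent polynomial
ring in two variables, i.e. the group algebra `k[ℤ × ℤ]`. Here `x = X 0`, `y = X 1`. -/
theorem stmt_19 (k : Type*) [Field k] (n : ℕ) (hn : 1 ≤ n)
    (L : Type*) [CommRing L] [Algebra (MvPolynomial (Fin 2) k) L]
    [IsLocalization
      (Submonoid.closure {(X 0 : MvPolynomial (Fin 2) k) ^ n * X 1 - 1, X 0}) L]
    [Algebra k L] [IsScalarTower k (MvPolynomial (Fin 2) k) L] :
    Nonempty (L ≃ₐ[k] AddMonoidAlgebra k (ℤ × ℤ)) :=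
  stmt_19_general k n L
end
end
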